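/- (Theorem 1.) Under the MIS/RMIS tableau setup, assume: (i) the inner table is third order and row-sum consistent, i.e. (b^I)^⊺𝟙 = 1, (b^I)^⊺c^I = 1/2, (b^I)^⊺(c^I × c^I) = 1/3, (b^I)^⊺A^I c^I = 1/6, and A^I 𝟙 = c^I; (ii) the outer table is explicit (A^O strictly lower triangular), row-sum consistent (A^O 𝟙_{s^O} = c^O), and fourth order, i.e. (b^O)^⊺𝟙 = 1, (b^O)^⊺c^O = 1/2, (b^O)^⊺((c^O)^2) = 1/3, (b^O)^⊺A^O c^O = 1/6, (b^O)^⊺((c^O)^3) = 1/4, (b^O × c^O)^⊺ A^O c^O = 1/8, (b^O)^⊺A^O((c^O)^2) = 1/12, and (b^O)^⊺A^O A^O c^O = 1/24; (iii) (v^O)^⊺ A^O c^O = 1/12, where v^O ∈ ℝ^{s^O} is defined by v^O_1 = 0, v^O_i = b^O_i (c^O_i − c^O_{i−1}) + (c^O_{i+1} − c^O_{i−1}) Σ_{j=i+1}^{s^O} b^O_j for 1 < i < s^O, and v^O_{s^O} = b^O_{s^O}(c^O_{s^O} − c^O_{s^O−1}). Then all slow fourth-order GARK coupling conditions hold: (b^s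 × c^s)^⊺ A^{s,f} c^f = 1/8, (b^s)^⊺ A^{s,f} (c^f × c^f) = 1/12, (b^s)^⊺ A^{s,s} A^{s,f} c^f = 1/24, (b^s)^⊺ A^{s,f} A^{f,f} c^f = 1/24, and (b^s)^⊺ A^{s,f} A^{f,s} c^s = 1/24. -/

import Mathlib

/-!
Row `i` of `A^{s,f} x` is `∑_{j<i} d_j (b^I)ᵀ x_j`, with `x_j` the `j`-th block of `x`. For
`x = c^f`, `(c^f)^2`, `A^{f,f} c^f` the block `x_j` is a combination of `𝟙`, `c^I`,
`c^I × c^I`, `A^I c^I` whose `b^I`-averages the third-order inner conditions pin down; so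
`d_j (b^I)ᵀ x_j = F(c_{j+1}) - F(c_j)` for `F = t^2/2, t^3/3, t^3/6`, and the row telescopes to
`F(c_i)`. The first four conditions then reduce to `(b^O)ᵀ (c^O)^3 = 1/4` and
`(b^O)ᵀ A^O (c^O)^2 = 1/12`.

For the last one, `A^{f,s}` interpolates linearly in `c^I` between consecutive rows of `A^O`
(whose first row vanishes by explicitness, and with `(b^O)ᵀ` as row `s^O`), so its `b^I`-average
on block `j` is the midpoint of rows `j` and `j + 1`. Exchanging the order of summation and
summing by parts turns `(b^O)ᵀ A^{s,f} A^{f,s} y` into `½ (v^O)ᵀ A^O y`; this is the origin of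
the vector `v^O`.
-/

open Matrix BigOperators Finset

/-- The increments `d_j = c^O_{j+1} - c^O_j` (with `d_{s^O} = 1 - c^O_{s^O}`). -/
noncomputable def misD (sO : ℕ) (cO : Fin sO → ℝ) (j : Fin sO) : ℝ :=
  if h : j.val + 1 < sO then cO ⟨j.val + 1, h⟩ - cO j else 1 - cO j

/-- The fast-fast GARK coefficient matrix `A^{f,f}` of the MIS/RMIS tableau. -/
noncomputable def misAff (sI sO : ℕ) (AI : Matrix (Fin sI) (Fin sI) ℝ)
    (bI : Fin sI → ℝ) (cO : Fin sO → ℝ) :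
    Matrix (Fin sO × Fin sI) (Fin sO × Fin sI) ℝ :=
  fun ip jq =>
    if jq.1 < ip.1 then misD sO cO jq.1 * bI jq.2
    else if jq.1 = ip.1 then misD sO cO ip.1 * AI ip.2 jq.2
    else 0

/-- The slow-fast GARK coefficient matrix `A^{s,f}` of the MIS/RMIS tableau. -/
noncomputable def misAsf (sI sO : ℕ) (bI : Fin sI → ℝ) (cO : Fin sO → ℝ) :
    Matrix (Fin sO) (Fin sO × Fin sI) ℝ :=
  fun i jq => if jq.1 < i then misD sO cO jq.1 * bI jq.2 else 0

/-- The fast-slow GARK coefficient matrix `A^{f,s}` of the MIS/RMIS tableau. -/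
noncomputable def misAfs (sI sO : ℕ) (cI : Fin sI → ℝ)
    (AO : Matrix (Fin sO) (Fin sO) ℝ) (bO : Fin sO → ℝ) :
    Matrix (Fin sO × Fin sI) (Fin sO) ℝ :=
  fun ip j =>
    if ip.1.val = 0 then
      (if h : 1 < sO then cI ip.2 * AO ⟨1, h⟩ j else 0)
    else if h : ip.1.val + 1 < sO then
      AO ip.1 j + cI ip.2 * (AO ⟨ip.1.val + 1, h⟩ j - AO ip.1 j)
    else
      AO ip.1 j + cI ip.2 * (bO j - AO ip.1 j)

/-- The fast abscissae `c^f` of the MIS/RMIS tableau. -/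
noncomputable def misCf (sI sO : ℕ) (cI : Fin sI → ℝ) (cO : Fin sO → ℝ) :
    Fin sO × Fin sI → ℝ :=
  fun ip => cO ip.1 + misD sO cO ip.1 * cI ip.2

/-- The RMIS fast weights `b^f` (i-th block is `b^O_i e_1`). -/
noncomputable def misBf (sI sO : ℕ) (bO : Fin sO → ℝ) : Fin sO × Fin sI → ℝ :=
  fun ip => if ip.2.val = 0 then bO ip.1 else 0

/-- The vector `v^O` appearing in the fourth-order RMIS condition. -/
noncomputable def misV (sO : ℕ) (bO cO : Fin sO → ℝ) (i : Fin sO) : ℝ :=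
  if i.val = 0 then 0
  else if h : i.val + 1 < sO then
    bO i * (cO i - cO ⟨i.val - 1, by have := i.isLt; omega⟩) +
      (cO ⟨i.val + 1, h⟩ - cO ⟨i.val - 1, by have := i.isLt; omega⟩) *
        ∑ j ∈ Finset.univ.filter (fun j => i < j), bO j
  else bO i * (cO i - cO ⟨i.val - 1, by have := i.isLt; omega⟩)

lemma Fin.sum_Iio_eq_sum_range {M : Type*} [AddCommMonoid M] {n : ℕ} (i : Fin n)
    (f : ℕ → M) :
    ∑ j ∈ Iio i, f j = ∑ m ∈ range i, f m := by
  rw [← Nat.Iio_eq_range, ← Fin.map_valEmbedding_Iio, sum_map]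
  rfl

section Quadrature

variable {ι : Type*} [Fintype ι] {b c : ι → ℝ}

lemma sum_mul_affine (h1 : ∑ q, b q = 1) (h2 : ∑ q, b q * c q = 1 / 2) (x y : ℝ) :
    ∑ q, b q * (x + y * c q) = x + y / 2 := by
  simp only [mul_add, sum_add_distrib, ← sum_mul, mul_left_comm _ y, ← mul_sum, h1, h2]
  ring

lemma sum_mul_affine_sq (h1 : ∑ q, b q = 1) (h2 : ∑ q, b q * c q = 1 / 2)
    (h3 : ∑ q, b q * (c q * c q) = 1 / 3) (x y : ℝ) :
    ∑ q, b q * (x + y * c q) ^ 2 = x ^ 2 + x * y + y ^ 2 / 3 := by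
  have expand : ∀ q, b q * (x + y * c q) ^ 2
      = x ^ 2 * b q + 2 * x * y * (b q * c q) + y ^ 2 * (b q * (c q * c q)) := fun q => by ring
  simp only [expand, sum_add_distrib, ← mul_sum, h1, h2, h3]
  ring

end Quadrature

namespace MIS

variable {sI sO : ℕ}

/-- `c^O` extended by `c^O_{s^O} = 1`, so that `d_j = c_{j+1} - c_j` for every `j`. -/
noncomputable def cExt (cO : Fin sO → ℝ) (n : ℕ) : ℝ :=
  if h : n < sO then cO ⟨n, h⟩ else 1

@[simp]
lemma cExt_val (cO : Fin sO → ℝ) (j : Fin sO) : cExt cO j = cO j := dif_pos j.isLt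

lemma cExt_succ (cO : Fin sO → ℝ) (j : Fin sO) : cExt cO (j + 1) = cO j + misD sO cO j := by
  unfold cExt misD
  split_ifs <;> ring

lemma misD_eq_cExt_sub (cO : Fin sO → ℝ) (j : Fin sO) :
    misD sO cO j = cExt cO (j + 1) - cExt cO j := by
  rw [cExt_succ, cExt_val]; ring

lemma misAsf_mulVec_apply (bI : Fin sI → ℝ) (cO : Fin sO → ℝ) (x : Fin sO × Fin sI → ℝ)
    (i : Fin sO) :
    (misAsf sI sO bI cO *ᵥ x) i = ∑ j ∈ Iio i, misD sO cO j * ∑ q, bI q * x (j, q) := by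
  simp only [mulVec, dotProduct, misAsf, Fintype.sum_prod_type, ite_mul, zero_mul]
  rw [← filter_gt_eq_Iio, sum_filter]
  refine sum_congr rfl fun j _ => ?_
  split_ifs <;> simp [mul_sum, mul_assoc]

lemma misAsf_mulVec_telescope (bI : Fin sI → ℝ) (cO : Fin sO → ℝ) (x : Fin sO × Fin sI → ℝ)
    (F : ℝ → ℝ)
    (hx : ∀ j, misD sO cO j * ∑ q, bI q * x (j, q) = F (cO j + misD sO cO j) - F (cO j))
    (i : Fin sO) :
    (misAsf sI sO bI cO *ᵥ x) i = F (cO i) - F (cExt cO 0) :=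
  calc (misAsf sI sO bI cO *ᵥ x) i = ∑ j ∈ Iio i, (F (cExt cO (j + 1)) - F (cExt cO j)) := by
        rw [misAsf_mulVec_apply]
        exact sum_congr rfl fun j _ => by rw [hx, cExt_succ, cExt_val]
    _ = F (cO i) - F (cExt cO 0) := by
        rw [Fin.sum_Iio_eq_sum_range i (fun m => F (cExt cO (m + 1)) - F (cExt cO m)),
          sum_range_sub (fun m => F (cExt cO m)), cExt_val]

section Rows

variable {AI : Matrix (Fin sI) (Fin sI) ℝ} {bI cI : Fin sI → ℝ} {cO : Fin sO → ℝ}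

lemma misAsf_mulVec_misCf (h1 : ∑ q, bI q = 1) (h2 : ∑ q, bI q * cI q = 1 / 2)
    (hc0 : cExt cO 0 = 0) (i : Fin sO) :
    (misAsf sI sO bI cO *ᵥ misCf sI sO cI cO) i = cO i ^ 2 / 2 := by
  rw [misAsf_mulVec_telescope bI cO _ (fun t => t ^ 2 / 2), hc0]
  · ring
  · intro j
    simp only [misCf, sum_mul_affine h1 h2]
    ring

lemma misAsf_mulVec_misCf_sq (h1 : ∑ q, bI q = 1) (h2 : ∑ q, bI q * cI q = 1 / 2)
    (h3 : ∑ q, bI q * (cI q * cI q) = 1 / 3) (hc0 : cExt cO 0 = 0) (i : Fin sO) :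
    (misAsf sI sO bI cO *ᵥ fun ip => misCf sI sO cI cO ip ^ 2) i = cO i ^ 3 / 3 := by
  rw [misAsf_mulVec_telescope bI cO _ (fun t => t ^ 3 / 3), hc0]
  · ring
  · intro j
    simp only [misCf, sum_mul_affine_sq h1 h2 h3]
    ring

lemma misAff_mulVec_apply (x : Fin sO × Fin sI → ℝ) (i : Fin sO) (p : Fin sI) :
    (misAff sI sO AI bI cO *ᵥ x) (i, p)
      = (misAsf sI sO bI cO *ᵥ x) i + misD sO cO i * (AI *ᵥ fun q => x (i, q)) p := by
  simp only [mulVec, dotProduct, misAff, misAsf, Fintype.sum_prod_type]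
  rw [← Fintype.sum_ite_eq' i fun j => misD sO cO j * ∑ q, AI p q * x (j, q), ← sum_add_distrib]
  refine sum_congr rfl fun j _ => ?_
  rcases lt_trichotomy j i with h | rfl | h
  · simp [h, h.ne]
  · simp [mul_sum, mul_assoc]
  · simp [h.not_gt, h.ne']

lemma misAsf_mulVec_misAff_mulVec_misCf (h1 : ∑ q, bI q = 1) (h2 : ∑ q, bI q * cI q = 1 / 2)
    (h4 : ∑ q, bI q * (AI *ᵥ cI) q = 1 / 6) (hAI : ∀ p, ∑ q, AI p q = cI p)
    (hc0 : cExt cO 0 = 0) (i : Fin sO) :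
    (misAsf sI sO bI cO *ᵥ (misAff sI sO AI bI cO *ᵥ misCf sI sO cI cO)) i = cO i ^ 3 / 6 := by
  have row : ∀ j p, (misAff sI sO AI bI cO *ᵥ misCf sI sO cI cO) (j, p)
      = cO j ^ 2 / 2 + misD sO cO j * cO j * cI p + misD sO cO j ^ 2 * (AI *ᵥ cI) p := by
    intro j p
    rw [misAff_mulVec_apply, misAsf_mulVec_misCf h1 h2 hc0]
    simp only [misCf, mulVec, dotProduct, mul_add, sum_add_distrib, ← sum_mul, hAI,
      mul_left_comm _ (misD sO cO j), ← mul_sum]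
    ring
  rw [misAsf_mulVec_telescope bI cO _ (fun t => t ^ 3 / 6), hc0]
  · ring
  · intro j
    have expand : ∀ p, bI p * (cO j ^ 2 / 2 + misD sO cO j * cO j * cI p
        + misD sO cO j ^ 2 * (AI *ᵥ cI) p) = cO j ^ 2 / 2 * bI p
        + misD sO cO j * cO j * (bI p * cI p) + misD sO cO j ^ 2 * (bI p * (AI *ᵥ cI) p) :=
      fun p => by ring
    simp only [row, expand, sum_add_distrib, ← mul_sum, h1, h2, h4]
    ring

end Rows

noncomputable def rowExt (AO : Matrix (Fin sO) (Fin sO) ℝ) (bO : Fin sO → ℝ) (n : ℕ) :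
    Fin sO → ℝ :=
  if h : n < sO then AO ⟨n, h⟩ else bO

@[simp]
lemma rowExt_val (AO : Matrix (Fin sO) (Fin sO) ℝ) (bO : Fin sO → ℝ) (j : Fin sO) :
    rowExt AO bO j = AO j := dif_pos j.isLt

section FastSlow

variable {cI : Fin sI → ℝ} {AO : Matrix (Fin sO) (Fin sO) ℝ} {bO : Fin sO → ℝ}

lemma misAfs_apply (hsO : 1 < sO) (h0 : rowExt AO bO 0 = 0) (j : Fin sO) (q : Fin sI) :
    misAfs sI sO cI AO bO (j, q)
      = rowExt AO bO j + cI q • (rowExt AO bO (j + 1) - rowExt AO bO j) := by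
  ext k
  by_cases hj : (j : ℕ) = 0
  · simp only [hj, h0, zero_add, sub_zero]
    simp [misAfs, rowExt, hj, hsO]
  · by_cases hj1 : (j : ℕ) + 1 < sO <;> simp [misAfs, rowExt, hj, hj1]

lemma misAfs_mulVec_apply (hsO : 1 < sO) (h0 : rowExt AO bO 0 = 0) (y : Fin sO → ℝ)
    (j : Fin sO) (q : Fin sI) :
    (misAfs sI sO cI AO bO *ᵥ y) (j, q)
      = rowExt AO bO j ⬝ᵥ y + (rowExt AO bO (j + 1) ⬝ᵥ y - rowExt AO bO j ⬝ᵥ y) * cI q := by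
  rw [mulVec, misAfs_apply hsO h0, add_dotProduct, smul_dotProduct, sub_dotProduct, smul_eq_mul,
    mul_comm]

end FastSlow

noncomputable def tailSum (bO : Fin sO → ℝ) (n : ℕ) : ℝ :=
  ∑ i : Fin sO with n ≤ i.val, bO i

lemma tailSum_of_le (bO : Fin sO → ℝ) {n : ℕ} (h : sO ≤ n) : tailSum bO n = 0 :=
  sum_eq_zero fun i hi => by
    have := i.isLt
    simp only [mem_filter] at hi
    omega

lemma tailSum_eq_add (bO : Fin sO → ℝ) {n : ℕ} (h : n < sO) :
    tailSum bO n = bO ⟨n, h⟩ + tailSum bO (n + 1) := by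
  rw [tailSum, tailSum, sum_filter, sum_filter, ← Fintype.sum_ite_eq' ⟨n, h⟩ bO,
    ← sum_add_distrib]
  refine sum_congr rfl fun i _ => ?_
  by_cases hi : (i : ℕ) = n
  · simp [hi, Fin.ext_iff]
  · have : i ≠ ⟨n, h⟩ := fun e => hi (by simp [e])
    by_cases hni : n ≤ i <;> simp [hni, this] <;> omega

lemma sum_mul_sum_Iio (b t : Fin sO → ℝ) :
    ∑ i, b i * ∑ j ∈ Iio i, t j = ∑ j : Fin sO, tailSum b (j + 1) * t j := by
  simp only [mul_sum, tailSum, sum_mul]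
  refine sum_comm' fun i j => ?_
  simp only [mem_univ, mem_Iio, mem_filter, true_and, and_true, Fin.lt_def]
  omega

lemma dotProduct_misAsf_mulVec (bI : Fin sI → ℝ) (bO cO : Fin sO → ℝ)
    (x : Fin sO × Fin sI → ℝ) :
    bO ⬝ᵥ (misAsf sI sO bI cO *ᵥ x)
      = ∑ j : Fin sO, tailSum bO (j + 1) * (misD sO cO j * ∑ q, bI q * x (j, q)) := by
  simp only [dotProduct, misAsf_mulVec_apply]
  exact sum_mul_sum_Iio bO _

lemma misV_eq (bO cO : Fin sO → ℝ) (i : Fin sO) (hi : (i : ℕ) ≠ 0) :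
    misV sO bO cO i = (cExt cO (i + 1) - cExt cO i) * tailSum bO (i + 1)
      + (cExt cO i - cExt cO (i - 1)) * tailSum bO i := by
  have tail : ∑ j with i < j, bO j = tailSum bO (i + 1) := by
    simp only [tailSum, Fin.lt_def, Nat.lt_iff_add_one_le]
  rw [tailSum_eq_add bO i.isLt]
  unfold misV
  rw [if_neg hi]
  simp only [← cExt_val cO]
  split_ifs with hi1
  · rw [tail]
    ring
  · rw [tailSum_of_le bO (by omega)]
    ring

/-- Summation by parts; the boundary terms vanish because `W 0 = 0` and `tailSum bO sO = 0`. -/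
lemma sum_tailSum_mul_misD (bO cO : Fin sO → ℝ) (W : ℕ → ℝ) (hW0 : W 0 = 0) :
    ∑ j : Fin sO, tailSum bO (j + 1) * (misD sO cO j * ((W j + W (j + 1)) / 2))
      = (∑ j : Fin sO, misV sO bO cO j * W j) / 2 := by
  set T := tailSum bO
  set d : ℕ → ℝ := fun n => cExt cO (n + 1) - cExt cO n
  set g : ℕ → ℝ := fun n => T n * (cExt cO n - cExt cO (n - 1)) * W n
  have shift : ∑ n ∈ range sO, g (n + 1) = ∑ n ∈ range sO, g n := by
    have g0 : g 0 = 0 := by simp [g, hW0]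
    have gs : g sO = 0 := by simp [g, T, tailSum_of_le bO le_rfl]
    have := sum_range_succ' g sO
    have := sum_range_succ g sO
    linarith
  calc _ = (∑ n ∈ range sO, (T (n + 1) * d n * W n + g (n + 1))) / 2 := by
        rw [← Fin.sum_univ_eq_sum_range, sum_div]
        refine sum_congr rfl fun j _ => ?_
        simp only [misD_eq_cExt_sub, g, d, Nat.add_sub_cancel]
        ring
    _ = (∑ n ∈ range sO, (T (n + 1) * d n * W n + g n)) / 2 := by
        rw [sum_add_distrib, shift, sum_add_distrib]
    _ = _ := by
        rw [← Fin.sum_univ_eq_sum_range (fun n => T (n + 1) * d n * W n + g n)]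
        congr 1
        refine sum_congr rfl fun j _ => ?_
        by_cases hj : (j : ℕ) = 0
        · simp [g, hj, hW0]
        · simp only [misV_eq bO cO j hj, g, d, T]
          ring

lemma dotProduct_misAsf_mulVec_misAfs_mulVec {bI cI : Fin sI → ℝ}
    {AO : Matrix (Fin sO) (Fin sO) ℝ} {bO cO : Fin sO → ℝ} (h1 : ∑ q, bI q = 1)
    (h2 : ∑ q, bI q * cI q = 1 / 2) (hsO : 1 < sO) (h0 : rowExt AO bO 0 = 0) (y : Fin sO → ℝ) :
    bO ⬝ᵥ (misAsf sI sO bI cO *ᵥ (misAfs sI sO cI AO bO *ᵥ y))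
      = misV sO bO cO ⬝ᵥ (AO *ᵥ y) / 2 := by
  have mean : ∀ j : Fin sO, ∑ q, bI q * (misAfs sI sO cI AO bO *ᵥ y) (j, q)
      = (rowExt AO bO j ⬝ᵥ y + rowExt AO bO (j + 1) ⬝ᵥ y) / 2 := fun j => by
    simp only [misAfs_mulVec_apply hsO h0]
    rw [sum_mul_affine h1 h2]
    ring
  simp only [dotProduct_misAsf_mulVec, mean]
  rw [sum_tailSum_mul_misD bO cO (fun n => rowExt AO bO n ⬝ᵥ y) (by simp [h0])]
  simp [dotProduct, mulVec]

end MIS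

/-- Theorem 1: Under third-order inner, explicit fourth-order outer,
row-sum consistency and the RMIS condition `(v^O)ᵀ A^O c^O = 1/12`, all slow
fourth-order GARK coupling conditions hold. -/
theorem slow_fourth_order_conditions (sI sO : ℕ) (hsO : 2 ≤ sO)
    (AI : Matrix (Fin sI) (Fin sI) ℝ) (bI cI : Fin sI → ℝ)
    (AO : Matrix (Fin sO) (Fin sO) ℝ) (bO cO : Fin sO → ℝ)
    (hcO1 : cO ⟨0, by omega⟩ = 0)
    -- inner table: third order and row-sum consistent
    (hbI1 : ∑ q, bI q = 1)
    (hbI2 : ∑ q, bI q * cI q = 1 / 2)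
    (hbI3 : ∑ q, bI q * (cI q * cI q) = 1 / 3)
    (hbI4 : ∑ q, bI q * (AI *ᵥ cI) q = 1 / 6)
    (hAIrow : ∀ p, ∑ q, AI p q = cI p)
    -- outer table: explicit, row-sum consistent and fourth order
    (hAOexp : ∀ i j : Fin sO, i ≤ j → AO i j = 0)
    (hbO5 : ∑ i, bO i * (cO i) ^ 3 = 1 / 4)
    (hbO7 : bO ⬝ᵥ (AO *ᵥ fun i => (cO i) ^ 2) = 1 / 12)
    -- the fourth-order RMIS condition
    (hv : misV sO bO cO ⬝ᵥ (AO *ᵥ cO) = 1 / 12) :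
    ((fun i => bO i * cO i) ⬝ᵥ (misAsf sI sO bI cO *ᵥ misCf sI sO cI cO) = 1 / 8) ∧
    (bO ⬝ᵥ (misAsf sI sO bI cO *ᵥ fun ip => (misCf sI sO cI cO ip) ^ 2) = 1 / 12) ∧
    (bO ⬝ᵥ (AO *ᵥ (misAsf sI sO bI cO *ᵥ misCf sI sO cI cO)) = 1 / 24) ∧
    (bO ⬝ᵥ (misAsf sI sO bI cO *ᵥ (misAff sI sO AI bI cO *ᵥ misCf sI sO cI cO)) = 1 / 24) ∧
    (bO ⬝ᵥ (misAsf sI sO bI cO *ᵥ (misAfs sI sO cI AO bO *ᵥ cO)) = 1 / 24) := by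
  have hc0 : MIS.cExt cO 0 = 0 := by rwa [MIS.cExt, dif_pos (by omega)]
  have h0 : MIS.rowExt AO bO 0 = 0 := by
    ext k
    rw [MIS.rowExt, dif_pos (by omega)]
    exact hAOexp _ k (Fin.mk_le_mk.mpr k.val.zero_le)
  have asf_cf : misAsf sI sO bI cO *ᵥ misCf sI sO cI cO = (1 / 2 : ℝ) • fun i => cO i ^ 2 := by
    ext i; simp [MIS.misAsf_mulVec_misCf hbI1 hbI2 hc0]; ring
  have hb_cube : ∀ k : ℝ, bO ⬝ᵥ (fun i => cO i ^ 3 / k) = 1 / 4 / k := fun k => by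
    rw [← hbO5, dotProduct, sum_div]
    exact sum_congr rfl fun i _ => by ring
  refine ⟨?_, ?_, ?_, ?_, ?_⟩
  · calc _ = bO ⬝ᵥ (fun i => cO i ^ 3 / 2) := by
          rw [asf_cf]
          exact sum_congr rfl fun i _ => by simp only [Pi.smul_apply, smul_eq_mul]; ring
      _ = 1 / 8 := by rw [hb_cube]; norm_num
  · rw [funext (MIS.misAsf_mulVec_misCf_sq hbI1 hbI2 hbI3 hc0), hb_cube]; norm_num
  · rw [asf_cf, mulVec_smul, dotProduct_smul, hbO7, smul_eq_mul]; norm_num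
  · rw [funext (MIS.misAsf_mulVec_misAff_mulVec_misCf hbI1 hbI2 hbI4 hAIrow hc0), hb_cube]
    norm_num
  · rw [MIS.dotProduct_misAsf_mulVec_misAfs_mulVec hbI1 hbI2 (by omega) h0, hv]; norm_num
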